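/- arXiv:2010.15182 — 6 statements merged into one kernel-verified Lean document; each statement's English description precedes it below -/
import Mathlib

section
/- Let p : E → B be a restriction semifunctor between restriction categories. Then every restriction retraction in E is p-prone. -/
open CategoryTheory

universe v₁ u₁ v₂ u₂ v₃ u₃

/-- A restriction category: a category equipped with a restriction combinator
satisfying the four restriction axioms [R.1]–[R.4]. -/
class RestrictionCategory (C : Type u₁) [Category.{v₁} C] where
  rest : ∀ {A B : C}, (A ⟶ B) → (A ⟶ A)
  rest_comp_self : ∀ {A B : C} (f : A ⟶ B), rest f ≫ f = f
  rest_comm : ∀ {A B C' : C} (f : A ⟶ B) (g : A ⟶ C'), rest f ≫ rest g = rest g ≫ rest f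
  rest_rest_comp : ∀ {A B C' : C} (f : A ⟶ B) (g : A ⟶ C'),
    rest (rest f ≫ g) = rest f ≫ rest g
  comp_rest : ∀ {A B C' : C} (f : A ⟶ B) (g : B ⟶ C'),
    f ≫ rest g = rest (f ≫ g) ≫ f

open RestrictionCategory

/-- A restriction semifunctor: preserves composition and restriction
(but not necessarily identities). -/
structure RestrictionSemifunctor (E : Type u₁) (B : Type u₂) [Category.{v₁} E]
    [Category.{v₂} B] [RestrictionCategory E] [RestrictionCategory B] where
  obj : E → B
  map : ∀ {X Y : E}, (X ⟶ Y) → (obj X ⟶ obj Y)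
  map_comp : ∀ {X Y Z : E} (f : X ⟶ Y) (g : Y ⟶ Z), map (f ≫ g) = map f ≫ map g
  map_rest : ∀ {X Y : E} (f : X ⟶ Y), map (rest f) = rest (map f)

variable {E : Type u₁} {B : Type u₂} [Category.{v₁} E] [Category.{v₂} B]
  [RestrictionCategory E] [RestrictionCategory B]

/-- A morphism `f' : X' ⟶ X` is `p`-prone if every precise triangle
`h ≫ p(f') = p(g)` in the base has a unique precise lifting. -/
def RestrictionSemifunctor.IsProne (p : RestrictionSemifunctor E B) {X' X : E}
    (f' : X' ⟶ X) : Prop :=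
  ∀ (Y : E) (g : Y ⟶ X) (h : p.obj Y ⟶ p.obj X'),
    h ≫ p.map f' = p.map g → rest h = rest (p.map g) →
    ∃! ht : Y ⟶ X', p.map ht = h ∧ ht ≫ f' = g ∧ rest ht = rest g

/-- A restriction retraction: `r : A ⟶ B` with a section `m : B ⟶ A` satisfying
`r ≫ m = r̄` and `m ≫ r = 𝟙 B`. -/
def IsRestrictionRetraction {C : Type u₃} [Category.{v₃} C] [RestrictionCategory C]
    {A B : C} (r : A ⟶ B) : Prop :=
  ∃ m : B ⟶ A, r ≫ m = rest r ∧ m ≫ r = 𝟙 B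


lemma rest_comp_absorb {C : Type u₃} [Category.{v₃} C] [RestrictionCategory C]
    {X Y Z : C} (f : X ⟶ Y) (g : Y ⟶ Z) :
    rest f ≫ rest (f ≫ g) = rest (f ≫ g) := by
  conv_rhs => rw [← rest_comp_self f, Category.assoc, rest_rest_comp]

/-- Every restriction retraction in E is p-prone. -/
theorem restrictionRetraction_isProne (p : RestrictionSemifunctor E B)
    {A B' : E} (r : A ⟶ B') (hr : IsRestrictionRetraction r) :
    p.IsProne r := by
  obtain ⟨m, hrm, hmr⟩ := hr
  intro Y g h hcomm hprec
  have hrest : rest (g ≫ m) = rest g := by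
    have e1 : rest g ≫ rest (g ≫ m) = rest (g ≫ m) := rest_comp_absorb g m
    have e2 : rest (g ≫ m) ≫ rest g = rest g := by
      have := rest_comp_absorb (g ≫ m) r
      rw [Category.assoc, hmr, Category.comp_id] at this
      exact this
    calc rest (g ≫ m) = rest g ≫ rest (g ≫ m) := e1.symm
      _ = rest (g ≫ m) ≫ rest g := (rest_comm _ _).symm
      _ = rest g := e2
  refine ⟨g ≫ m, ⟨?_, by rw [Category.assoc, hmr, Category.comp_id], hrest⟩, ?_⟩
  · rw [p.map_comp, ← hcomm, Category.assoc, ← p.map_comp, hrm, p.map_rest,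
      comp_rest, hcomm, ← hprec, rest_comp_self]
  · rintro k ⟨-, hk2, hk3⟩
    calc k = rest k ≫ k := (rest_comp_self k).symm
      _ = rest (k ≫ r) ≫ k := by rw [hk3, ← hk2]
      _ = k ≫ rest r := (comp_rest k r).symm
      _ = k ≫ r ≫ m := by rw [← hrm]
      _ = g ≫ m := by rw [← Category.assoc, hk2]
end

section
/- Let p : E → B be a restriction semifunctor between restriction categories. If r : Y' → Y is a restriction retraction in E, f' : Y → X is a morphism of E, and the composite r ≫ f' : Y' → X is p-prone, then f' is p-prone. -/
open CategoryTheory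

universe v₁ u₁ v₂ u₂ v₃ u₃

open RestrictionCategory

variable {E : Type u₁} {B : Type u₂} [Category.{v₁} E] [Category.{v₂} B]
  [RestrictionCategory E] [RestrictionCategory B]

section AuxLemmas
variable {C : Type u₃} [Category.{v₃} C] [RestrictionCategory C]

lemma rest_id' (A : C) : rest (𝟙 A) = 𝟙 A := by
  have h := rest_comp_self (𝟙 A)
  simpa using h

lemma rest_rest' {A B' : C} (f : A ⟶ B') : rest (rest f) = rest f := by
  have h := rest_rest_comp f (𝟙 A)
  simpa [rest_id'] using h

/-- `rest f ≫ rest (f ≫ g) = rest (f ≫ g)`. -/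
lemma rest_comp_le' {A B' C' : C} (f : A ⟶ B') (g : B' ⟶ C') :
    rest f ≫ rest (f ≫ g) = rest (f ≫ g) := by
  have h := rest_rest_comp f (f ≫ g)
  have h2 : rest f ≫ f ≫ g = f ≫ g := by
    rw [← Category.assoc, rest_comp_self]
  rw [h2] at h
  exact h.symm

/-- `rest (f ≫ rest g) = rest (f ≫ g)`. -/
lemma rest_comp_rest' {A B' C' : C} (f : A ⟶ B') (g : B' ⟶ C') :
    rest (f ≫ rest g) = rest (f ≫ g) := by
  rw [comp_rest]
  have h1 : rest (rest (f ≫ g) ≫ f) = rest (f ≫ g) ≫ rest f := by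
    conv_lhs => rw [← rest_rest' (f ≫ g)]
    rw [rest_rest_comp, rest_rest']
  rw [h1, ← rest_comm, rest_comp_le']

end AuxLemmas

/-- If `r` is a restriction retraction and `r ≫ f'` is p-prone, then `f'` is p-prone. -/
theorem prone_of_restrictionRetraction_comp_prone (p : RestrictionSemifunctor E B)
    {Y' Y X : E} (r : Y' ⟶ Y) (f' : Y ⟶ X)
    (hr : IsRestrictionRetraction r) (h : p.IsProne (r ≫ f')) :
    p.IsProne f' := by
  obtain ⟨m, hrm, hmr⟩ := hr
  have hrestm : rest m = 𝟙 Y := by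
    have h1 := rest_comp_le' m r
    rw [hmr, rest_id', Category.comp_id] at h1
    exact h1
  have hme : m ≫ r ≫ f' = f' := by rw [← Category.assoc, hmr, Category.id_comp]
  intro Z g q hcomm hrest
  set e : p.obj Y ⟶ p.obj Y := p.map (𝟙 Y) with hedef
  have he : rest e = e := by rw [hedef, ← p.map_rest, rest_id']
  have hef : e ≫ p.map f' = p.map f' := by rw [hedef, ← p.map_comp, Category.id_comp]
  -- rest (q ≫ e) = rest q
  have hqe : rest (q ≫ e) = rest q := by
    have le1 : rest (q ≫ e) ≫ rest q = rest (q ≫ e) := by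
      have hle := rest_comp_le' q e
      have hc := rest_comm q (q ≫ e)
      rw [hc] at hle
      exact hle
    have le2 : rest (q ≫ e) ≫ rest q = rest q := by
      have hx : (q ≫ e) ≫ p.map f' = p.map g := by rw [Category.assoc, hef, hcomm]
      have l := rest_comp_le' (q ≫ e) (p.map f')
      rw [hx, ← hrest] at l
      exact l
    exact le1.symm.trans le2
  -- q ≫ e = q
  have hqe' : q ≫ e = q := by
    have hcr := comp_rest q e
    rw [he] at hcr
    rw [hcr, hqe, rest_comp_self]
  -- apply proneness of r ≫ f' to q ≫ p.map m
  have hcomm' : (q ≫ p.map m) ≫ p.map (r ≫ f') = p.map g := by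
    rw [Category.assoc, ← p.map_comp, hme, hcomm]
  have hrest' : rest (q ≫ p.map m) = rest (p.map g) := by
    have : rest (q ≫ p.map m) = rest (q ≫ e) := by
      rw [← rest_comp_rest' q (p.map m), ← p.map_rest, hrestm, ← hedef]
    rw [this, hqe, hrest]
  obtain ⟨k, ⟨hk1, hk2, hk3⟩, huniq⟩ := h Z g (q ≫ p.map m) hcomm' hrest'
  refine ⟨k ≫ r, ⟨?_, ?_, ?_⟩, ?_⟩
  · rw [p.map_comp, hk1, Category.assoc, ← p.map_comp, hmr, ← hedef, hqe']
  · rw [Category.assoc, hk2]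
  · -- rest (k ≫ r) = rest g
    have hg' : (k ≫ r) ≫ f' = g := by rw [Category.assoc, hk2]
    have leA : rest (k ≫ r) ≫ rest g = rest g := by
      have l := rest_comp_le' (k ≫ r) f'
      rw [hg'] at l
      exact l
    have leB : rest g ≫ rest (k ≫ r) = rest (k ≫ r) := by
      have l := rest_comp_le' k r
      rw [hk3] at l
      exact l
    have hc := rest_comm k (k ≫ r)
    rw [hk3] at hc
    calc rest (k ≫ r) = rest g ≫ rest (k ≫ r) := leB.symm
      _ = rest (k ≫ r) ≫ rest g := hc
      _ = rest g := leA
  · rintro y ⟨hy1, hy2, hy3⟩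
    have hym : y ≫ m = k := by
      apply huniq
      refine ⟨?_, ?_, ?_⟩
      · rw [p.map_comp, hy1]
      · rw [Category.assoc, hme, hy2]
      · rw [← rest_comp_rest' y m, hrestm, Category.comp_id, hy3]
    rw [← hym, Category.assoc, hmr, Category.comp_id]
end

section
/- Let q : F → E and p : E → B be latent fibrations between restriction categories. Then the composite restriction semifunctor q followed by p, from F to B, is a latent fibration. -/
/-!
Given `f : A ⟶ p(q X)`, take a `p`-prone `g` over `f` and then a `q`-prone `f'` over
`g ≫ q(𝟙 X)`; since `f ≫ p(q(𝟙 X)) = f`, the map `f'` lies over `f`. A precise triangle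
against `f'` in the base is lifted first along `g` and then along `f'`. Because semifunctors
need not preserve identities, `q(𝟙 X)` is only a restriction idempotent; it can be cancelled
from the end of a precise triangle, which is what makes both lifts (and their uniqueness) fit.
-/

open CategoryTheory

universe v₁ u₁ v₂ u₂ v₃ u₃

open RestrictionCategory

variable {E : Type u₁} {B : Type u₂} [Category.{v₁} E] [Category.{v₂} B]
  [RestrictionCategory E] [RestrictionCategory B]

/-- A restriction semifunctor `p : E → B` is a latent fibration if every
`f : A ⟶ p(X)` in the base with `f ≫ p(𝟙 X) = f` has a p-prone morphism over it. -/
def RestrictionSemifunctor.IsLatentFibration (p : RestrictionSemifunctor E B) : Prop :=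
  ∀ (X : E) (A : B) (f : A ⟶ p.obj X), f ≫ p.map (𝟙 X) = f →
    ∃ (X' : E) (f' : X' ⟶ X) (hA : p.obj X' = A),
      p.IsProne f' ∧ p.map f' = eqToHom hA ≫ f

/-- Composition (in diagrammatic order) of restriction semifunctors. -/
def RestrictionSemifunctor.comp {F₀ : Type u₃} [Category.{v₃} F₀] [RestrictionCategory F₀]
    (q : RestrictionSemifunctor F₀ E) (p : RestrictionSemifunctor E B) :
    RestrictionSemifunctor F₀ B where
  obj Z := p.obj (q.obj Z)
  map f := p.map (q.map f)
  map_comp f g := by simp only [q.map_comp, p.map_comp]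
  map_rest f := by simp only [q.map_rest, p.map_rest]

namespace RestrictionCategory

variable {C : Type*} [Category C] [RestrictionCategory C]

lemma rest_id (A : C) : rest (𝟙 A) = 𝟙 A := by
  simpa using rest_comp_self (𝟙 A)

lemma comp_eq_of_comp_comp_rest_eq {W X Y Z : C} {k : W ⟶ X} {c : X ⟶ Y} {e : Y ⟶ Z}
    {m : W ⟶ Y} (h : k ≫ c ≫ rest e = m) (hr : rest k = rest m) : k ≫ c = m :=
  have hm : m = rest (k ≫ c ≫ e) ≫ k ≫ c := by
    rw [← h, ← Category.assoc, comp_rest, Category.assoc]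
  calc k ≫ c = rest m ≫ k ≫ c := by rw [← hr, ← Category.assoc, rest_comp_self]
    _ = m := by rw [hm, rest_rest_comp, Category.assoc, rest_comp_self]

end RestrictionCategory

namespace RestrictionSemifunctor

variable {F : Type u₃} [Category.{v₃} F] [RestrictionCategory F]

lemma map_comp_map_id (p : RestrictionSemifunctor E B) {X Y : E} (f : X ⟶ Y) :
    p.map f ≫ p.map (𝟙 Y) = p.map f := by
  rw [← p.map_comp, Category.comp_id]

lemma map_id_eq_rest (p : RestrictionSemifunctor E B) (X : E) :
    p.map (𝟙 X) = rest (p.map (𝟙 X)) := by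
  rw [← p.map_rest, rest_id]

lemma IsProne.comp {q : RestrictionSemifunctor F E} {p : RestrictionSemifunctor E B}
    {X' X : F} {f : X' ⟶ X} (hf : q.IsProne f) {g : q.obj X' ⟶ q.obj X} (hg : p.IsProne g)
    (hfg : q.map f = g ≫ q.map (𝟙 X)) : (q.comp p).IsProne f := by
  intro Y y h hcomm hrest
  change p.obj (q.obj Y) ⟶ p.obj (q.obj X') at h
  change h ≫ p.map (q.map f) = p.map (q.map y) at hcomm
  change rest h = rest (p.map (q.map y)) at hrest
  have hqf_rest : q.map f = g ≫ rest (q.map (𝟙 X)) := by rw [hfg, ← map_id_eq_rest]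
  have hpg : h ≫ p.map g = p.map (q.map y) := by
    refine comp_eq_of_comp_comp_rest_eq (e := p.map (q.map (𝟙 X))) ?_ hrest
    rw [← p.map_rest, ← map_id_eq_rest, ← p.map_comp, ← hfg]
    exact hcomm
  obtain ⟨k, ⟨hpk, hkg, hk_rest⟩, hk_unique⟩ := hg _ _ h hpg hrest
  have hkf : k ≫ q.map f = q.map y := by
    rw [hfg, ← Category.assoc, hkg, map_comp_map_id]
  obtain ⟨l, ⟨hql, hlf, hl_rest⟩, hl_unique⟩ := hf _ _ k hkf hk_rest
  refine ⟨l, ⟨by change p.map (q.map l) = h; rw [hql, hpk], hlf, hl_rest⟩, ?_⟩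
  rintro l' ⟨hpql', hl'f, hl'_rest⟩
  have hql'_rest : rest (q.map l') = rest (q.map y) := by
    rw [← q.map_rest, hl'_rest, q.map_rest]
  have hql'g : q.map l' ≫ g = q.map y :=
    comp_eq_of_comp_comp_rest_eq (by rw [← hqf_rest, ← q.map_comp, hl'f]) hql'_rest
  exact hl_unique l' ⟨hk_unique _ ⟨hpql', hql'g, hql'_rest⟩, hl'f, hl'_rest⟩

end RestrictionSemifunctor

/-- Latent fibrations are closed under composition. -/
theorem latentFibration_comp {F₀ : Type u₃} [Category.{v₃} F₀] [RestrictionCategory F₀]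
    (q : RestrictionSemifunctor F₀ E) (p : RestrictionSemifunctor E B)
    (hq : q.IsLatentFibration) (hp : p.IsLatentFibration) :
    (q.comp p).IsLatentFibration := by
  intro X A f hf
  change A ⟶ p.obj (q.obj X) at f
  change f ≫ p.map (q.map (𝟙 X)) = f at hf
  have hf' : f ≫ p.map (𝟙 (q.obj X)) = f := by
    rw [← hf, Category.assoc, p.map_comp_map_id]
  obtain ⟨X', g, rfl, hg, hpg⟩ := hp (q.obj X) _ f hf'
  obtain ⟨X'', f', rfl, hf'', hqf⟩ := hq X _ (g ≫ q.map (𝟙 X))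
    (by rw [Category.assoc, q.map_comp_map_id])
  rw [eqToHom_refl, Category.id_comp] at hpg hqf
  refine ⟨X'', f', rfl, hf''.comp hg hqf, ?_⟩
  change p.map (q.map f') = 𝟙 _ ≫ f
  rw [Category.id_comp, hqf, p.map_comp, hpg, hf]
end

section
/- Let p : E → B be a latent fibration between restriction categories. Then every morphism f : X → Y of E factors as f = v ≫ c where v : X → X' is subvertical, c : X' → Y is p-prone, v̄ = f̄ (so the factoring triangle is precise), and (p c)‾ = p(v). -/
open CategoryTheory

universe v₁ u₁ v₂ u₂ v₃ u₃

open RestrictionCategory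

variable {E : Type u₁} {B : Type u₂} [Category.{v₁} E] [Category.{v₂} B]
  [RestrictionCategory E] [RestrictionCategory B]

section Aux
variable {C : Type u₃} [Category.{v₃} C] [RestrictionCategory C]

lemma rest_comp_eqToHom {A A' X : C} (g : X ⟶ A) (h : A = A') :
    rest (g ≫ eqToHom h) = rest g := by subst h; simp

lemma rest_eqToHom_comp {A A' X : C} (h : A' = A) (g : A ⟶ X) :
    rest (eqToHom h ≫ g) = eqToHom h ≫ rest g ≫ eqToHom h.symm := by
  subst h; simp

end Aux

/-- In a latent fibration, every morphism `f : X ⟶ Y` factors precisely as a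
subvertical morphism `v` (one whose image under `p` is a restriction idempotent)
followed by a prone morphism `c`, with `v̄ = f̄` and `(p c)‾ = p(v)`. -/


theorem latentFibration_subvertical_prone_factorization
    (p : RestrictionSemifunctor E B) (hp : p.IsLatentFibration)
    {X Y : E} (f : X ⟶ Y) :
    ∃ (X' : E) (v : X ⟶ X') (c : X' ⟶ Y) (hobj : p.obj X = p.obj X'),
      -- `v` is subvertical: `p(v)` is a restriction idempotent
      rest (p.map v ≫ eqToHom hobj.symm) = p.map v ≫ eqToHom hobj.symm ∧
      -- `c` is prone
      p.IsProne c ∧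
      -- the triangle commutes and is precise
      v ≫ c = f ∧ rest v = rest f ∧
      -- `(p c)‾ = p(v)`
      rest (p.map c) = eqToHom hobj.symm ≫ p.map v := by
  have h1 : p.map f ≫ p.map (𝟙 Y) = p.map f := by
    rw [← p.map_comp]; simp
  obtain ⟨X', c, hA, hprone, hpc⟩ := hp Y (p.obj X) (p.map f) h1
  set h : p.obj X ⟶ p.obj X' := rest (p.map f) ≫ eqToHom hA.symm with hdef
  have hcomp : h ≫ p.map c = p.map f := by
    rw [hpc, hdef]
    simp [rest_comp_self]
  have hrest : rest h = rest (p.map f) := by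
    rw [hdef, rest_comp_eqToHom, rest_rest']
  obtain ⟨v, ⟨hpv, hvc, hrv⟩, -⟩ := hprone X f h hcomp hrest
  refine ⟨X', v, c, hA.symm, ?_, hprone, hvc, hrv, ?_⟩
  · have : p.map v ≫ eqToHom hA = rest (p.map f) := by
      rw [hpv, hdef]; simp
    simpa [this] using rest_rest' (p.map f)
  · rw [hpc, hpv, hdef, rest_eqToHom_comp]
end

section
/- Let p : E → B be an admissible restriction semifunctor between restriction categories and X an object of E. Then: (a) if e₁* and e₂* are p-prone restriction idempotents on X over restriction idempotents e₁ and e₂ on p(X) respectively, then e₁* ≫ e₂* is a p-prone restriction idempotent on X with p(e₁* ≫ e₂*) = e₁ ≫ e₂; and (b) for every restriction idempotent d on X and every p-prone restriction idempotent d* on X with p(d*) = p(d), one has d ≤ d*. -/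
open CategoryTheory

universe v₁ u₁ v₂ u₂ v₃ u₃

open RestrictionCategory

variable {E : Type u₁} {B : Type u₂} [Category.{v₁} E] [Category.{v₂} B]
  [RestrictionCategory E] [RestrictionCategory B]

/-- A restriction semifunctor is admissible if every restriction idempotent `e` on
`p(X)` with `e ≫ p(𝟙 X) = e` has a p-prone restriction idempotent on `X` over it. -/
def RestrictionSemifunctor.IsAdmissible (p : RestrictionSemifunctor E B) : Prop :=
  ∀ (X : E) (e : p.obj X ⟶ p.obj X), rest e = e → e ≫ p.map (𝟙 X) = e →
    ∃ es : X ⟶ X, rest es = es ∧ p.IsProne es ∧ p.map es = e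

section AuxLemmas

variable {C : Type u₃} [Category.{v₃} C] [RestrictionCategory C]

lemma rest_idem' {A B' : C} (f : A ⟶ B') : rest f ≫ rest f = rest f := by
  have := rest_rest_comp f f
  rw [rest_comp_self] at this
  exact this.symm

/-- `rest f ≫ rest (f ≫ g) = rest (f ≫ g)`. -/
lemma rest_absorb_left {A B₁ B₂ : C} (f : A ⟶ B₁) (g : B₁ ⟶ B₂) :
    rest f ≫ rest (f ≫ g) = rest (f ≫ g) := by
  have := rest_rest_comp f (f ≫ g)
  rw [← Category.assoc, rest_comp_self] at this
  exact this.symm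

/-- `rest (f ≫ g) ≫ rest f = rest (f ≫ g)`. -/
lemma rest_absorb_right {A B₁ B₂ : C} (f : A ⟶ B₁) (g : B₁ ⟶ B₂) :
    rest (f ≫ g) ≫ rest f = rest (f ≫ g) := by
  rw [rest_comm, rest_absorb_left]

/-- If `rest u = rest (u ≫ v ≫ w)` then `rest (u ≫ v) = rest (u ≫ v ≫ w)`. -/
lemma rest_squeeze {A B₁ B₂ B₃ : C} (u : A ⟶ B₁) (v : B₁ ⟶ B₂) (w : B₂ ⟶ B₃)
    (h : rest u = rest (u ≫ v ≫ w)) : rest (u ≫ v) = rest (u ≫ v ≫ w) := by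
  have h1 : rest (u ≫ v ≫ w) ≫ rest (u ≫ v) = rest (u ≫ v ≫ w) := by
    have := rest_absorb_right (u ≫ v) w
    simpa [Category.assoc] using this
  have h2 : rest (u ≫ v) ≫ rest (u ≫ v ≫ w) = rest (u ≫ v) := by
    have := rest_absorb_right u v
    rw [h] at this
    exact this
  rw [rest_comm] at h2
  rw [h1] at h2
  exact h2.symm

end AuxLemmas

/-- For an admissible restriction semifunctor:
(a) composites of p-prone restriction idempotents over restriction idempotents are
p-prone restriction idempotents over the composite; and
(b) every restriction idempotent `d` on `X` is `≤` any p-prone restriction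
idempotent `ds` on `X` with `p(ds) = p(d)` (where `f ≤ g` means `f̄ ≫ g = f`). -/
theorem admissible_prone_idempotents (p : RestrictionSemifunctor E B)
    (hadm : p.IsAdmissible) (X : E) :
    (∀ (e₁s e₂s : X ⟶ X) (e₁ e₂ : p.obj X ⟶ p.obj X),
        rest e₁s = e₁s → rest e₂s = e₂s →
        p.IsProne e₁s → p.IsProne e₂s →
        rest e₁ = e₁ → rest e₂ = e₂ →
        p.map e₁s = e₁ → p.map e₂s = e₂ →
        (rest (e₁s ≫ e₂s) = e₁s ≫ e₂s ∧ p.IsProne (e₁s ≫ e₂s) ∧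
          p.map (e₁s ≫ e₂s) = e₁ ≫ e₂)) ∧
    (∀ (d ds : X ⟶ X),
        rest d = d → rest ds = ds → p.IsProne ds → p.map ds = p.map d →
        rest d ≫ ds = d) := by
  constructor
  · intro e₁s e₂s e₁ e₂ hr1 hr2 hp1 hp2 hre1 hre2 hm1 hm2
    have hcomp : p.map (e₁s ≫ e₂s) = e₁ ≫ e₂ := by
      rw [p.map_comp, hm1, hm2]
    have hrest : rest (e₁s ≫ e₂s) = e₁s ≫ e₂s := by
      conv_lhs => rw [← hr1]
      rw [rest_rest_comp, hr1, hr2]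
    refine ⟨hrest, ?_, hcomp⟩
    intro Y g h hcom hprec
    rw [hcomp] at hcom
    -- h ≫ e₁ ≫ e₂ = p.map g
    have hcom' : (h ≫ e₁) ≫ e₂ = p.map g := by rw [Category.assoc]; exact hcom
    have hprec1 : rest (h ≫ e₁) = rest (p.map g) := by
      have := rest_squeeze h e₁ e₂ (by rw [hcom]; exact hprec)
      rw [hcom] at this
      exact this
    -- lift through e₂s
    obtain ⟨k, ⟨hk1, hk2, hk3⟩, hkuniq⟩ :=
      hp2 Y g (h ≫ e₁) (by rw [Category.assoc, hm2]; exact hcom) hprec1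
    -- lift through e₁s
    obtain ⟨m, ⟨hm1', hm2', hm3'⟩, hmuniq⟩ :=
      hp1 Y k h (by rw [hm1]; exact hk1.symm)
        (by rw [hk1, hprec1]; exact hprec)
    refine ⟨m, ⟨hm1', by rw [← Category.assoc, hm2', hk2], by rw [hm3', hk3]⟩, ?_⟩
    intro m' ⟨hm1'', hm2'', hm3''⟩
    have hk'rest : rest (m' ≫ e₁s) = rest g := by
      have := rest_squeeze m' e₁s e₂s (by rw [hm2'']; exact hm3'')
      rw [hm2''] at this
      exact this
    have hk' : m' ≫ e₁s = k := by
      apply hkuniq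
      refine ⟨by rw [p.map_comp, hm1'', hm1], by rw [Category.assoc, hm2''], hk'rest⟩
    apply hmuniq
    exact ⟨hm1'', hk', by rw [hm3'', ← hk3]⟩
  · intro d ds hd hds hpds hmap
    have hidem : ds ≫ ds = ds := by
      have := rest_idem' ds; rw [hds] at this; exact this
    have hdd : d ≫ d = d := by
      have := rest_idem' d; rw [hd] at this; exact this
    obtain ⟨ht, ⟨ht1, ht2, ht3⟩, _⟩ :=
      hpds X d (p.map d)
        (by rw [hmap, ← p.map_comp, hdd]) rfl
    rw [hd, ← ht2, Category.assoc, hidem]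
end

section
/- A restriction semifunctor p : E → B between restriction categories is hyperconnected if and only if it is both separated and admissible. -/
open CategoryTheory

universe v₁ u₁ v₂ u₂ v₃ u₃

open RestrictionCategory

variable {E : Type u₁} {B : Type u₂} [Category.{v₁} E] [Category.{v₂} B]
  [RestrictionCategory E] [RestrictionCategory B]

/-- A restriction semifunctor is separated if it is injective on restriction
idempotents on each object. -/
def RestrictionSemifunctor.IsSeparated (p : RestrictionSemifunctor E B) : Prop :=
  ∀ (X : E) (e e' : X ⟶ X), rest e = e → rest e' = e' → p.map e = p.map e' → e = e'

/-- A restriction semifunctor is hyperconnected if, for each object `X` of `E`,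
`e ↦ p(e)` is a bijection from the restriction idempotents on `X` to the
restriction idempotents `d` on `p(X)` with `d ≫ p(𝟙 X) = d`. -/
def RestrictionSemifunctor.IsHyperconnected (p : RestrictionSemifunctor E B) : Prop :=
  ∀ X : E, Function.Bijective
    (fun e : {e : X ⟶ X // rest e = e} =>
      (⟨p.map e.1, by rw [← p.map_rest, e.2],
        by rw [← p.map_comp, Category.comp_id]⟩ :
        {d : p.obj X ⟶ p.obj X // rest d = d ∧ d ≫ p.map (𝟙 X) = d}))

/-- A restriction semifunctor is hyperconnected iff it is separated and admissible. -/
theorem hyperconnected_iff_separated_and_admissible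
    (p : RestrictionSemifunctor E B) :
    p.IsHyperconnected ↔ (p.IsSeparated ∧ p.IsAdmissible) := by
  have rest_self_comp : ∀ {A B' : E} (f : A ⟶ B'), rest f ≫ rest f = rest f := by
    intro A B' f
    have := rest_rest_comp f f
    rw [rest_comp_self] at this
    exact this.symm
  have rest_rest : ∀ {A B' : E} (f : A ⟶ B'), rest (rest f) = rest f := by
    intro A B' f
    have h1 : rest (rest f ≫ rest f) = rest f ≫ rest (rest f) := rest_rest_comp f (rest f)
    rw [rest_self_comp] at h1
    have h2 : rest f ≫ rest (rest f) = rest (rest f) ≫ rest f := rest_comm f (rest f)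
    rw [h1, h2, rest_comp_self]
  constructor
  · intro hyp
    have sep : p.IsSeparated := by
      intro X e e' he he' hpe
      have := (hyp X).1 (a₁ := ⟨e, he⟩) (a₂ := ⟨e', he'⟩) (Subtype.ext hpe)
      exact congrArg Subtype.val this
    refine ⟨sep, ?_⟩
    intro X e he hce
    obtain ⟨⟨es, hes⟩, heq⟩ := (hyp X).2 ⟨e, he, hce⟩
    have hpes : p.map es = e := congrArg Subtype.val heq
    refine ⟨es, hes, ?_, hpes⟩
    intro Y g h h1 h2
    have hee : e ≫ e = e := by
      nth_rewrite 1 [← he]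
      exact rest_comp_self e
    -- g ≫ es = g
    have hres : rest (g ≫ es) = rest g := by
      apply sep Y _ _ (rest_rest _) (rest_rest _)
      rw [p.map_rest, p.map_rest, p.map_comp, ← h1, Category.assoc, hpes, hee]
    have hge : g ≫ es = g := by
      conv_lhs => rw [← hes]
      rw [comp_rest, hres, rest_comp_self]
    -- p g = h
    have hpg : p.map g = h := by
      have he' : p.map g = h ≫ e := by rw [← h1, hpes]
      have : h ≫ rest e = rest (h ≫ e) ≫ h := comp_rest h e
      rw [he] at this
      rw [he', this, ← he', ← h2, rest_comp_self]
    refine ⟨g, ⟨hpg, hge, rfl⟩, ?_⟩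
    intro ht ⟨hta, htb, htc⟩
    have : ht ≫ es = ht := by
      conv_lhs => rw [← hes]
      rw [comp_rest, htb, ← htc, rest_comp_self]
    rw [← this, htb]
  · rintro ⟨sep, adm⟩ X
    constructor
    · rintro ⟨e, he⟩ ⟨e', he'⟩ h
      exact Subtype.ext (sep X e e' he he' (congrArg Subtype.val h))
    · rintro ⟨d, hd, hdc⟩
      obtain ⟨es, hes, -, hpes⟩ := adm X d hd hdc
      exact ⟨⟨es, hes⟩, Subtype.ext hpes⟩
end
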